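/- Let (ν_j) satisfy ν_j ≤ C j^{-3/2-δ} for some δ > 0, and let Z_j be i.i.d. standard normals. Then ∑_{j=1}^∞ ν_j |Z_j| converges almost surely, and there exist constants c', C' > 0 such that for any k ≥ 1 and ε > 0 with k^{2+2δ} ε² large enough, P(∑_{j≥k} ν_j |Z_j| ≥ ε) ≤ C' 2^k exp(-c' k^{2+2δ} ε²). -/

import Mathlib

/-
Slice the tail `∑_{j ≥ k} ν_j |Z_j|` into the blocks `[k(i+1), k(i+2))`. Since
`E e^{t|Z|} ≤ 2 e^{t²/2}`, independence and Chernoff give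
`P(∑_{j ∈ F} |Z_j| ≥ c) ≤ 2^{|F|} exp(-c²/(2|F|))`, and on block `i` the weights are at most
`C (k(i+1))^{-3/2-δ}`. If the tail reaches `ε`, some block `i` reaches its share
`ε (i+1)^{-1-δ} / (2A)`, where `A = ∑_i (i+1)^{-1-δ}`; this has probability at most
`2^k exp(-c' k^{2+2δ} ε² (i+1))` with `c' = 1/(8A²C²)`. Summing the geometric series costs a
factor `2` once `c' k^{2+2δ} ε² ≥ log 2`. Almost sure convergence holds because
`E ∑ ν_j |Z_j| = E|Z| ∑ ν_j < ∞`.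
-/

open MeasureTheory ProbabilityTheory Real Finset
open scoped ENNReal NNReal

lemma exp_mul_abs_le (t x : ℝ) : exp (t * |x|) ≤ exp (t * x) + exp (-t * x) := by
  calc exp (t * |x|) ≤ exp |t * x| := by
        gcongr
        rw [abs_mul]
        exact mul_le_mul_of_nonneg_right (le_abs_self t) (abs_nonneg x)
    _ ≤ exp (t * x) + exp (-t * x) := by
        rw [neg_mul]; exact exp_abs_le _

lemma sum_Ico_mul_eq_sum_range_blocks {M : Type*} [AddCommMonoid M] (g : ℕ → M) (k N : ℕ) :
    ∑ j ∈ Ico k (k * (N + 1)), g j =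
      ∑ i ∈ range N, ∑ j ∈ Ico (k * (i + 1)) (k * (i + 2)), g j := by
  induction N with
  | zero => simp
  | succ N ih =>
    rw [sum_range_succ, ← ih, sum_Ico_consecutive _ (Nat.le_mul_of_pos_right k N.succ_pos)
      (Nat.mul_le_mul_left k (by omega))]

lemma exists_block_sum_ge_of_tail_tsum_ge {g a : ℕ → ℝ} {k : ℕ} {ε : ℝ} (hg : ∀ j, 0 ≤ g j)
    (hk : 0 < k) (ha : Summable a) (haε : ∑' i, a i < ε)
    (h : ε ≤ ∑' j : {j : ℕ // k ≤ j}, g j) :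
    ∃ i, a i ≤ ∑ j ∈ Ico (k * (i + 1)) (k * (i + 2)), g j := by
  by_contra! hlt
  have ha0 (i : ℕ) : 0 ≤ a i := (sum_nonneg fun j _ => hg j).trans (hlt i).le
  suffices ∑' j : {j : ℕ // k ≤ j}, g j ≤ ∑' i, a i by linarith
  refine tsum_le_of_sum_le' (tsum_nonneg ha0) fun u => ?_
  set N := u.sup Subtype.val
  have hsub : u.map (Function.Embedding.subtype _) ⊆ Ico k (k * (N + 1)) := by
    intro j hj
    obtain ⟨j, hju, rfl⟩ := mem_map.1 hj
    have : j.val ≤ N := le_sup (f := Subtype.val) hju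
    exact mem_Ico.2 ⟨j.2, this.trans_lt (by nlinarith)⟩
  calc ∑ j ∈ u, g j = ∑ j ∈ u.map (Function.Embedding.subtype _), g j := by rw [sum_map]; rfl
    _ ≤ ∑ j ∈ Ico k (k * (N + 1)), g j := sum_le_sum_of_subset_of_nonneg hsub fun j _ _ => hg j
    _ = ∑ i ∈ range N, ∑ j ∈ Ico (k * (i + 1)) (k * (i + 2)), g j :=
        sum_Ico_mul_eq_sum_range_blocks g k N
    _ ≤ ∑ i ∈ range N, a i := sum_le_sum fun i _ => (hlt i).le
    _ ≤ ∑' i, a i := ha.sum_le_tsum _ fun i _ => ha0 i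

lemma block_exponent_eq {K u p ε A C : ℝ} (hK : 0 < K) (hu : 0 < u) :
    (ε * u ^ (-(p - 1 / 2)) / (2 * A) * (K * u) ^ p / C) ^ 2 / (2 * K) =
      1 / (8 * A ^ 2 * C ^ 2) * K ^ (2 * p - 1) * ε ^ 2 * u := by
  have hu' : (u ^ (-(p - 1 / 2)) * u ^ p) ^ 2 = u := by
    rw [← rpow_add hu, ← rpow_natCast, ← rpow_mul hu.le]
    ring_nf; exact rpow_one u
  have hK' : (K ^ p) ^ 2 = K ^ (2 * p - 1) * K := by
    rw [← rpow_natCast, ← rpow_mul hK.le, ← rpow_add_one hK.ne']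
    ring_nf
  rw [mul_rpow hK.le hu.le]
  calc (ε * u ^ (-(p - 1 / 2)) / (2 * A) * (K ^ p * u ^ p) / C) ^ 2 / (2 * K)
      = ε ^ 2 * (u ^ (-(p - 1 / 2)) * u ^ p) ^ 2 * (K ^ p) ^ 2 / (8 * A ^ 2 * C ^ 2 * K) := by
        ring
    _ = 1 / (8 * A ^ 2 * C ^ 2) * K ^ (2 * p - 1) * ε ^ 2 * u := by
        rw [hu', hK']
        field_simp

lemma summable_of_nonneg_of_le_mul_rpow {ν : ℕ → ℝ} {C p : ℝ} (hp : 1 < p)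
    (hν0 : ∀ j, 0 ≤ ν j) (hν : ∀ j, 1 ≤ j → ν j ≤ C * (j : ℝ) ^ (-p)) : Summable ν := by
  refine (summable_nat_add_iff 1).1 (Summable.of_nonneg_of_le (fun j => hν0 _)
    (fun j => hν (j + 1) (by omega)) ?_)
  exact ((summable_nat_add_iff 1).2 (Real.summable_nat_rpow.2 (by linarith))).mul_left C

lemma tsum_ofReal_mul_exp_neg_mul_succ_le {M y : ℝ} (hM : 0 ≤ M) (hy : log 2 ≤ y) :
    ∑' i : ℕ, ENNReal.ofReal (M * exp (-(y * (i + 1)))) ≤ ENNReal.ofReal (2 * M * exp (-y)) := by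
  have hr : exp (-y) ≤ 2⁻¹ := by
    rw [← exp_log (by norm_num : (0 : ℝ) < 2⁻¹), log_inv]
    exact exp_le_exp.2 (neg_le_neg hy)
  calc ∑' i : ℕ, ENNReal.ofReal (M * exp (-(y * (i + 1))))
      ≤ ∑' i : ℕ, ENNReal.ofReal (M * exp (-y)) * 2⁻¹ ^ i := by
        refine ENNReal.tsum_le_tsum fun i => ?_
        rw [← ENNReal.ofReal_ofNat 2, ← ENNReal.ofReal_inv_of_pos two_pos,
          ← ENNReal.ofReal_pow (by norm_num), ← ENNReal.ofReal_mul (by positivity)]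
        refine ENNReal.ofReal_le_ofReal ?_
        rw [mul_assoc]
        gcongr
        calc exp (-(y * (i + 1))) = exp (-y) * exp (-y) ^ i := by
              rw [← exp_nat_mul, ← exp_add]; ring_nf
          _ ≤ exp (-y) * 2⁻¹ ^ i := by gcongr
    _ = ENNReal.ofReal (2 * M * exp (-y)) := by
        rw [ENNReal.tsum_mul_left, ENNReal.tsum_geometric_two, mul_assoc,
          ENNReal.ofReal_mul two_pos.le, ENNReal.ofReal_ofNat, mul_comm]

section

variable {Ω : Type*} [MeasurableSpace Ω] {P : Measure Ω}

lemma integrable_exp_mul_of_map_gaussianReal [IsProbabilityMeasure P] {X : Ω → ℝ} {μ : ℝ}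
    {v : ℝ≥0} (hmap : P.map X = gaussianReal μ v) (t : ℝ) :
    Integrable (fun ω => exp (t * X ω)) P :=
  mgf_pos_iff.1 (by rw [mgf_gaussianReal hmap]; positivity)

lemma integrable_exp_mul_abs_of_map_gaussianReal [IsProbabilityMeasure P] {X : Ω → ℝ}
    (hX : Measurable X) {μ : ℝ} {v : ℝ≥0} (hmap : P.map X = gaussianReal μ v) (t : ℝ) :
    Integrable (fun ω => exp (t * |X ω|)) P := by
  have hint := integrable_exp_mul_of_map_gaussianReal hmap
  refine ((hint t).add (hint (-t))).mono' (by fun_prop) (Filter.Eventually.of_forall fun ω => ?_)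
  rw [norm_of_nonneg (exp_pos _).le]
  exact exp_mul_abs_le t (X ω)

lemma mgf_abs_le_of_map_gaussianReal [IsProbabilityMeasure P] {X : Ω → ℝ}
    (hX : Measurable X) {v : ℝ≥0} (hmap : P.map X = gaussianReal 0 v) (t : ℝ) :
    mgf (fun ω => |X ω|) P t ≤ 2 * exp (v * t ^ 2 / 2) := by
  have hint := integrable_exp_mul_of_map_gaussianReal hmap
  calc mgf (fun ω => |X ω|) P t ≤ mgf X P t + mgf X P (-t) := by
        rw [mgf, mgf, mgf, ← integral_add (hint t) (hint (-t))]
        exact integral_mono (integrable_exp_mul_abs_of_map_gaussianReal hX hmap t)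
          ((hint t).add (hint (-t))) fun ω => exp_mul_abs_le t (X ω)
    _ = 2 * exp (v * t ^ 2 / 2) := by
        rw [mgf_gaussianReal hmap, mgf_gaussianReal hmap, neg_sq]; ring_nf

lemma ae_summable_mul_abs {Z : ℕ → Ω → ℝ} (hmeas : ∀ j, Measurable (Z j)) {μ : Measure ℝ}
    (hlaw : ∀ j, P.map (Z j) = μ) (hμ : Integrable id μ) {ν : ℕ → ℝ} (hν : Summable ν) :
    ∀ᵐ ω ∂P, Summable fun j => ν j * |Z j ω| := by
  have hlin (j : ℕ) : ∫⁻ ω, ‖ν j * |Z j ω|‖ₑ ∂P = ‖ν j‖ₑ * ∫⁻ x, ‖x‖ₑ ∂μ := by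
    simp_rw [enorm_mul, enorm_abs]
    rw [lintegral_const_mul _ (hmeas j).enorm, ← hlaw j,
      lintegral_map measurable_enorm (hmeas j)]
  have hfin : ∫⁻ ω, ∑' j, ‖ν j * |Z j ω|‖ₑ ∂P ≠ ∞ := by
    rw [lintegral_tsum fun j => by fun_prop]
    simp_rw [hlin, ENNReal.tsum_mul_right]
    exact ENNReal.mul_ne_top (tsum_enorm_ne_top_iff_summable_norm.2 hν.abs) hμ.2.ne
  filter_upwards [ae_lt_top' (by fun_prop) hfin] with ω hω
  exact (tsum_enorm_ne_top_iff_summable_norm.1 hω.ne).of_norm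

lemma measure_sum_abs_ge_le [IsProbabilityMeasure P] {ι : Type*} {Z : ι → Ω → ℝ}
    (hmeas : ∀ j, Measurable (Z j)) (hlaw : ∀ j, P.map (Z j) = gaussianReal 0 1)
    (hindep : iIndepFun Z P) {s : Finset ι} (hs : s.Nonempty) {c : ℝ} (hc : 0 ≤ c) :
    P {ω | c ≤ ∑ j ∈ s, |Z j ω|} ≤ ENNReal.ofReal (2 ^ #s * exp (-c ^ 2 / (2 * #s))) := by
  have hn : (0 : ℝ) < #s := by exact_mod_cast hs.card_pos
  set t := c / #s
  have habs : iIndepFun (fun j ω => |Z j ω|) P :=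
    hindep.comp (fun _ x => |x|) fun _ => measurable_abs
  have hmgf : mgf (∑ j ∈ s, fun ω => |Z j ω|) P t ≤ (2 * exp (t ^ 2 / 2)) ^ #s := by
    rw [habs.mgf_sum (fun j => (hmeas j).abs), ← prod_const]
    exact prod_le_prod (fun _ _ => mgf_nonneg) fun j _ => by
      simpa using mgf_abs_le_of_map_gaussianReal (hmeas j) (hlaw j) t
  have hchernoff := measure_ge_le_exp_mul_mgf c (by positivity)
    (habs.integrable_exp_mul_sum (s := s) (fun j => (hmeas j).abs)
      fun j _ => integrable_exp_mul_abs_of_map_gaussianReal (hmeas j) (hlaw j) t)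
  rw [← ofReal_measureReal]
  refine ENNReal.ofReal_le_ofReal ?_
  calc P.real {ω | c ≤ ∑ j ∈ s, |Z j ω|}
      ≤ exp (-t * c) * (2 * exp (t ^ 2 / 2)) ^ #s := by
        simpa only [Finset.sum_apply] using hchernoff.trans (by gcongr)
    _ = 2 ^ #s * exp (-c ^ 2 / (2 * #s)) := by
        rw [mul_pow, ← exp_nat_mul, mul_left_comm, ← exp_add]
        congr 2
        simp only [t]
        field_simp
        ring

lemma measure_sum_mul_abs_ge_le [IsProbabilityMeasure P] {ι : Type*} {Z : ι → Ω → ℝ}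
    (hmeas : ∀ j, Measurable (Z j)) (hlaw : ∀ j, P.map (Z j) = gaussianReal 0 1)
    (hindep : iIndepFun Z P) {s : Finset ι} (hs : s.Nonempty) {ν : ι → ℝ} {a b : ℝ}
    (ha : 0 ≤ a) (hb : 0 < b) (hν : ∀ j ∈ s, ν j ≤ b) :
    P {ω | a ≤ ∑ j ∈ s, ν j * |Z j ω|} ≤
      ENNReal.ofReal (2 ^ #s * exp (-(a / b) ^ 2 / (2 * #s))) := by
  refine (measure_mono fun ω (hω : a ≤ _) => ?_).trans
    (measure_sum_abs_ge_le hmeas hlaw hindep hs (div_nonneg ha hb.le))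
  rw [Set.mem_ofPred_eq, div_le_iff₀' hb, mul_sum]
  exact hω.trans (sum_le_sum fun j hj => by gcongr; exact hν j hj)

lemma measure_tail_tsum_ge_le_tsum_measure_block_sum_ge {g : ℕ → Ω → ℝ} (hg : ∀ j ω, 0 ≤ g j ω)
    {a : ℕ → ℝ} {k : ℕ} {ε : ℝ} (hk : 0 < k) (ha : Summable a) (haε : ∑' i, a i < ε) :
    P {ω | ε ≤ ∑' j : {j : ℕ // k ≤ j}, g j ω} ≤
      ∑' i, P {ω | a i ≤ ∑ j ∈ Ico (k * (i + 1)) (k * (i + 2)), g j ω} :=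
  (measure_mono fun _ hω => Set.mem_iUnion.2
    (exists_block_sum_ge_of_tail_tsum_ge (hg · _) hk ha haε hω)).trans (measure_iUnion_le _)

lemma measure_block_sum_ge_le [IsProbabilityMeasure P] {Z : ℕ → Ω → ℝ}
    (hmeas : ∀ j, Measurable (Z j)) (hlaw : ∀ j, P.map (Z j) = gaussianReal 0 1)
    (hindep : iIndepFun Z P) {ν : ℕ → ℝ} {C p : ℝ} (hC : 0 < C) (hp : 0 ≤ p)
    (hν : ∀ j, 1 ≤ j → ν j ≤ C * (j : ℝ) ^ (-p)) {m n : ℕ} (hm : 0 < m) (hn : 0 < n)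
    {a : ℝ} (ha : 0 ≤ a) :
    P {ω | a ≤ ∑ j ∈ Ico m (m + n), ν j * |Z j ω|} ≤
      ENNReal.ofReal (2 ^ n * exp (-(a * (m : ℝ) ^ p / C) ^ 2 / (2 * n))) := by
  have hm' : (0 : ℝ) < m := Nat.cast_pos.2 hm
  have hbound (j : ℕ) (hj : j ∈ Ico m (m + n)) : ν j ≤ C * (m : ℝ) ^ (-p) := by
    have hmj := (mem_Ico.1 hj).1
    calc ν j ≤ C * (j : ℝ) ^ (-p) := hν j (hm.trans_le hmj)
      _ ≤ C * (m : ℝ) ^ (-p) := mul_le_mul_of_nonneg_left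
        (rpow_le_rpow_of_nonpos hm' (Nat.cast_le.2 hmj) (neg_nonpos.2 hp)) hC.le
  have hratio : a / (C * (m : ℝ) ^ (-p)) = a * (m : ℝ) ^ p / C := by
    rw [rpow_neg hm'.le]
    field_simp
  simpa only [Nat.card_Ico, Nat.add_sub_cancel_left, hratio] using
    measure_sum_mul_abs_ge_le hmeas hlaw hindep (nonempty_Ico.2 (by omega)) ha (by positivity)
      hbound

lemma measure_tail_tsum_ge_le [IsProbabilityMeasure P] {Z : ℕ → Ω → ℝ}
    (hmeas : ∀ j, Measurable (Z j)) (hlaw : ∀ j, P.map (Z j) = gaussianReal 0 1)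
    (hindep : iIndepFun Z P) {ν : ℕ → ℝ} {C p A : ℝ} (hν0 : ∀ j, 0 ≤ ν j) (hC : 0 < C)
    (hp : 0 ≤ p) (hν : ∀ j, 1 ≤ j → ν j ≤ C * (j : ℝ) ^ (-p))
    (hA : HasSum (fun i : ℕ => ((i : ℝ) + 1) ^ (-(p - 1 / 2))) A) {k : ℕ} (hk : 0 < k)
    {ε : ℝ} (hε : 0 < ε)
    (hlog : log 2 ≤ 1 / (8 * A ^ 2 * C ^ 2) * (k : ℝ) ^ (2 * p - 1) * ε ^ 2) :
    P {ω | ε ≤ ∑' j : {j : ℕ // k ≤ j}, ν j * |Z j ω|} ≤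
      ENNReal.ofReal
        (2 * 2 ^ k * exp (-(1 / (8 * A ^ 2 * C ^ 2)) * (k : ℝ) ^ (2 * p - 1) * ε ^ 2)) := by
  set y := 1 / (8 * A ^ 2 * C ^ 2) * (k : ℝ) ^ (2 * p - 1) * ε ^ 2
  have hA0 : 0 < A := hA.tsum_eq ▸ hA.summable.tsum_pos (fun _ => by positivity) 0 (by positivity)
  -- Block `i` is allowed the share `a i` of `ε`; the decay `(i + 1) ^ (-(p - 1 / 2))` makes the
  -- Chernoff exponent of block `i` exactly `y * (i + 1)`, and `∑ a i = ε / 2 < ε`.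
  set a : ℕ → ℝ := fun i => ε * ((i : ℝ) + 1) ^ (-(p - 1 / 2)) / (2 * A)
  have ha : HasSum a (ε / 2) := by
    rw [show ε / 2 = ε * A / (2 * A) by field_simp]
    exact (hA.mul_left ε).div_const (2 * A)
  have hblock (i : ℕ) : P {ω | a i ≤ ∑ j ∈ Ico (k * (i + 1)) (k * (i + 2)), ν j * |Z j ω|} ≤
      ENNReal.ofReal (2 ^ k * exp (-(y * (i + 1)))) := by
    rw [show k * (i + 2) = k * (i + 1) + k by ring]
    refine (measure_block_sum_ge_le hmeas hlaw hindep hC hp hν (by positivity) hk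
      (by simp only [a]; positivity)).trans_eq ?_
    simp only [a]
    push_cast
    rw [neg_div, block_exponent_eq (Nat.cast_pos.2 hk) (by positivity)]
  calc P {ω | ε ≤ ∑' j : {j : ℕ // k ≤ j}, ν j * |Z j ω|}
      ≤ ∑' i, P {ω | a i ≤ ∑ j ∈ Ico (k * (i + 1)) (k * (i + 2)), ν j * |Z j ω|} :=
        measure_tail_tsum_ge_le_tsum_measure_block_sum_ge
          (fun j ω => mul_nonneg (hν0 j) (abs_nonneg _)) hk ha.summable
          (by rw [ha.tsum_eq]; linarith)
    _ ≤ ∑' i : ℕ, ENNReal.ofReal (2 ^ k * exp (-(y * (i + 1)))) := ENNReal.tsum_le_tsum hblock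
    _ ≤ ENNReal.ofReal (2 * 2 ^ k * exp (-y)) :=
        tsum_ofReal_mul_exp_neg_mul_succ_le (by positivity) hlog
    _ = _ := by simp only [y, neg_mul]

end

/-- If `0 ≤ ν_j ≤ C j^{-3/2-δ}` with `δ > 0` and `Z_j` are i.i.d. standard normals, then
`∑_j ν_j |Z_j|` converges almost surely, and there are constants `c', C' > 0` such that for
all `k ≥ 1` and `ε > 0` with `k^{2+2δ} ε²` large enough,
`P(∑_{j ≥ k} ν_j |Z_j| ≥ ε) ≤ C' 2^k exp (-c' k^{2+2δ} ε²)`. -/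
theorem stmt_12 {Ω : Type*} [MeasurableSpace Ω] (P : Measure Ω) [IsProbabilityMeasure P]
    (Z : ℕ → Ω → ℝ) (hmeas : ∀ j, Measurable (Z j))
    (hlaw : ∀ j, P.map (Z j) = gaussianReal 0 1)
    (hindep : iIndepFun Z P)
    (ν : ℕ → ℝ) (C δ : ℝ) (hδ : 0 < δ) (hν0 : ∀ j, 0 ≤ ν j)
    (hν : ∀ j : ℕ, 1 ≤ j → ν j ≤ C * (j : ℝ) ^ (-(3 / 2) - δ)) :
    (∀ᵐ ω ∂P, Summable fun j => ν j * |Z j ω|) ∧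
    ∃ c' > 0, ∃ C' > 0, ∃ T : ℝ, ∀ k : ℕ, 1 ≤ k → ∀ ε : ℝ, 0 < ε →
      T ≤ (k : ℝ) ^ (2 + 2 * δ) * ε ^ 2 →
      P {ω | ε ≤ ∑' j : {j : ℕ // k ≤ j}, ν j * |Z j ω|} ≤
        ENNReal.ofReal (C' * 2 ^ k * Real.exp (-c' * (k : ℝ) ^ (2 + 2 * δ) * ε ^ 2)) := by
  set C₁ := max C 1
  have hC₁ : 0 < C₁ := lt_max_of_lt_right one_pos
  have hν₁ (j : ℕ) (hj : 1 ≤ j) : ν j ≤ C₁ * (j : ℝ) ^ (-(3 / 2 + δ)) := by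
    rw [neg_add']
    exact (hν j hj).trans (by gcongr; exact le_max_left C 1)
  obtain ⟨A, hA⟩ : Summable fun i : ℕ => ((i : ℝ) + 1) ^ (-(3 / 2 + δ - 1 / 2)) := by
    simpa using (summable_nat_add_iff 1).2 (Real.summable_nat_rpow.2 (by linarith))
  have hA0 : 0 < A := hA.tsum_eq ▸ hA.summable.tsum_pos (fun _ => by positivity) 0 (by positivity)
  refine ⟨ae_summable_mul_abs hmeas hlaw (memLp_one_iff_integrable.1 (memLp_id_gaussianReal 1))
    (summable_of_nonneg_of_le_mul_rpow (by linarith) hν0 hν₁), ?_⟩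
  set c' := 1 / (8 * A ^ 2 * C₁ ^ 2)
  have hc' : 0 < c' := by positivity
  have hexp : 2 * (3 / 2 + δ) - 1 = 2 + 2 * δ := by ring
  refine ⟨c', hc', 2, two_pos, log 2 / c', fun k hk ε hε hT => ?_⟩
  simpa only [hexp] using measure_tail_tsum_ge_le hmeas hlaw hindep hν0 hC₁ (by linarith) hν₁ hA
    hk hε (by rw [hexp, mul_assoc]; exact (div_le_iff₀' hc').1 hT)
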